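/- Let H be a real Hilbert space, f : H → ℝ differentiable with L-Lipschitz gradient, Ψ : H → (−∞,∞] proper closed convex, and F := f + Ψ. Fix x ∈ H, a direction p ∈ H with x̃ := x + p, and suppose ⟨∇f(x), p⟩ + Ψ(x̃) − Ψ(x) + (1/2)⟨T p, p⟩ ≤ 0 for a bounded linear T with ⟨v, Tv⟩ ≥ μ‖v‖² (μ > 0). Then for every α ∈ [0,1], F(x + αp) ≤ F(x) + (‖p‖²/2)(α²L − αμ). In particular, if additionally α ≤ μ/(L + 2γ‖p‖^δ) for given γ > 0 and δ ≥ 0, then F(x + αp) ≤ F(x) − γ·α²·‖p‖^{2+δ}. -/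

import Mathlib

/-! The descent lemma bounds `f (x + α • p)` by `f x + α ⟪∇f x, p⟫ + α² L ‖p‖² / 2`, convexity
bounds `Ψ (x + α • p)` by `Ψ x + α (Ψ (x + p) - Ψ x)`, and the model inequality together with
`⟪p, T p⟫ ≥ μ ‖p‖²` makes the first-order part at most `-α μ ‖p‖² / 2`. The sufficient decrease
is then the first bound rewritten using `α (L + 2 γ ‖p‖^δ) ≤ μ`. -/
open scoped RealInnerProductSpace

open Set

theorem le_add_add_half_of_hasDerivAt_le_affine {g g' : ℝ → ℝ} {a b : ℝ}
    (hg : ∀ t ∈ Icc (0 : ℝ) 1, HasDerivAt g (g' t) t)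
    (hg' : ∀ t ∈ Icc (0 : ℝ) 1, g' t ≤ a + b * t) :
    g 1 ≤ g 0 + a + b / 2 := by
  let h : ℝ → ℝ := fun t ↦ g t - a * t - b / 2 * t ^ 2
  have hh : ∀ t ∈ Icc (0 : ℝ) 1, HasDerivAt h (g' t - a - b * t) t := fun t ht ↦ by
    refine (((hg t ht).sub ((hasDerivAt_id' t).const_mul a)).sub
      ((hasDerivAt_pow 2 t).const_mul (b / 2))).congr_deriv ?_
    norm_num; ring
  have h_anti : AntitoneOn h (Icc 0 1) := by
    refine antitoneOn_of_hasDerivWithinAt_nonpos (convex_Icc 0 1)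
      (fun t ht ↦ (hh t ht).continuousAt.continuousWithinAt)
      (fun t ht ↦ (hh t (interior_subset ht)).hasDerivWithinAt) fun t ht ↦ ?_
    linarith [hg' t (interior_subset ht)]
  have := h_anti (left_mem_Icc.2 zero_le_one) (right_mem_Icc.2 zero_le_one) zero_le_one
  simp only [h] at this
  linarith

theorem le_add_inner_add_of_lipschitz_gradient {H : Type*} [NormedAddCommGroup H]
    [InnerProductSpace ℝ H] [CompleteSpace H] {f : H → ℝ} {f' : H → H} {L : ℝ}
    (hf : ∀ x, HasGradientAt f (f' x) x) (hLip : ∀ x y, ‖f' x - f' y‖ ≤ L * ‖x - y‖)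
    (x p : H) : f (x + p) ≤ f x + ⟪f' x, p⟫ + L / 2 * ‖p‖ ^ 2 := by
  have hderiv (t : ℝ) :
      HasDerivAt (fun t : ℝ ↦ f (x + t • p)) ⟪f' (x + t • p), p⟫ t := by
    have hline : HasDerivAt (fun t : ℝ ↦ x + t • p) p t := by
      simpa using ((hasDerivAt_id t).smul_const p).const_add x
    simpa [Function.comp_def, (hf _).fderiv_apply] using
      (hf (x + t • p)).hasFDerivAt.comp_hasDerivAt t hline
  have hbound : ∀ t ∈ Icc (0 : ℝ) 1,
      ⟪f' (x + t • p), p⟫ ≤ ⟪f' x, p⟫ + L * ‖p‖ ^ 2 * t := fun t ht ↦ by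
    have hdiff : ‖f' (x + t • p) - f' x‖ ≤ L * (t * ‖p‖) := by
      simpa [norm_smul, abs_of_nonneg ht.1] using hLip (x + t • p) x
    calc ⟪f' (x + t • p), p⟫ = ⟪f' x, p⟫ + ⟪f' (x + t • p) - f' x, p⟫ := by
          rw [inner_sub_left]; ring
      _ ≤ ⟪f' x, p⟫ + ‖f' (x + t • p) - f' x‖ * ‖p‖ := by gcongr; exact real_inner_le_norm _ _
      _ ≤ ⟪f' x, p⟫ + L * (t * ‖p‖) * ‖p‖ := by gcongr
      _ = ⟪f' x, p⟫ + L * ‖p‖ ^ 2 * t := by ring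
  have := le_add_add_half_of_hasDerivAt_le_affine (fun t _ ↦ hderiv t) hbound
  simp only [one_smul, zero_smul, add_zero] at this
  linarith

theorem ConvexOn.le_add_smul_sub {E : Type*} [AddCommGroup E] [Module ℝ E] {s : Set E}
    {Ψ : E → ℝ} (hΨ : ConvexOn ℝ s Ψ) {x p : E} (hx : x ∈ s) (hxp : x + p ∈ s) {α : ℝ}
    (hα : α ∈ Icc (0 : ℝ) 1) : Ψ (x + α • p) ≤ Ψ x + α * (Ψ (x + p) - Ψ x) := by
  have hpt : (1 - α) • x + α • (x + p) = x + α • p := by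
    rw [smul_add, sub_smul, one_smul]; abel
  have := hΨ.2 hx hxp (sub_nonneg.2 hα.2) hα.1 (by ring)
  rw [hpt, smul_eq_mul, smul_eq_mul] at this
  linarith

theorem sq_div_two_mul_sub_le_neg_rpow {r L μ γ δ α : ℝ} (hr : 0 ≤ r) (hδ : 2 + δ ≠ 0)
    (hD : 0 < L + 2 * γ * r ^ δ) (hα : 0 ≤ α) (hα_le : α ≤ μ / (L + 2 * γ * r ^ δ)) :
    r ^ 2 / 2 * (α ^ 2 * L - α * μ) ≤ -(γ * α ^ 2 * r ^ (2 + δ)) := by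
  have hαD : α * (α * (L + 2 * γ * r ^ δ)) ≤ α * μ :=
    mul_le_mul_of_nonneg_left ((le_div_iff₀ hD).1 hα_le) hα
  rw [Real.rpow_add' hr hδ, Real.rpow_two]
  nlinarith [mul_le_mul_of_nonneg_left hαD (sq_nonneg r)]

theorem line_search_sufficient_decrease_general
    {H : Type*} [NormedAddCommGroup H] [InnerProductSpace ℝ H] [CompleteSpace H]
    (f : H → ℝ) (f' : H → H) (hf : ∀ x, HasGradientAt f (f' x) x)
    (L : ℝ) (hL : 0 < L) (hLip : ∀ x y : H, ‖f' x - f' y‖ ≤ L * ‖x - y‖)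
    (Ψ : H → ℝ) (hΨ_conv : ConvexOn ℝ Set.univ Ψ)
    (T : H →L[ℝ] H) (μ : ℝ) (hT : ∀ v : H, μ * ‖v‖ ^ 2 ≤ ⟪v, T v⟫)
    (γ δ : ℝ) (hγ : 0 < γ) (hδ : 0 ≤ δ)
    (x p : H)
    (hmodel : ⟪f' x, p⟫ + Ψ (x + p) - Ψ x + (1 / 2) * ⟪T p, p⟫ ≤ 0) :
    (∀ α : ℝ, α ∈ Set.Icc (0 : ℝ) 1 →
      f (x + α • p) + Ψ (x + α • p) ≤
        f x + Ψ x + (‖p‖ ^ 2 / 2) * (α ^ 2 * L - α * μ)) ∧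
    (∀ α : ℝ, α ∈ Set.Icc (0 : ℝ) 1 → α ≤ μ / (L + 2 * γ * ‖p‖ ^ δ) →
      f (x + α • p) + Ψ (x + α • p) ≤
        f x + Ψ x - γ * α ^ 2 * ‖p‖ ^ (2 + δ)) := by
  have hmodel_decrease : ⟪f' x, p⟫ + (Ψ (x + p) - Ψ x) ≤ -(μ / 2 * ‖p‖ ^ 2) := by
    linarith [hT p, real_inner_comm (T p) p]
  have hdecrease (α : ℝ) (hα : α ∈ Icc (0 : ℝ) 1) :
      f (x + α • p) + Ψ (x + α • p) ≤ f x + Ψ x + ‖p‖ ^ 2 / 2 * (α ^ 2 * L - α * μ) := by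
    have hf_step := le_add_inner_add_of_lipschitz_gradient hf hLip x (α • p)
    have hΨ_step := hΨ_conv.le_add_smul_sub (mem_univ x) (mem_univ (x + p)) hα
    rw [inner_smul_right, norm_smul, Real.norm_of_nonneg hα.1, mul_pow] at hf_step
    nlinarith [mul_le_mul_of_nonneg_left hmodel_decrease hα.1]
  refine ⟨hdecrease, fun α hα hα_le ↦ ?_⟩
  have hD : 0 < L + 2 * γ * ‖p‖ ^ δ := by positivity
  linarith [hdecrease α hα,
    sq_div_two_mul_sub_le_neg_rpow (norm_nonneg p) (by positivity) hD hα.1 hα_le]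

/-- Line search decrease: if the proximal-Newton model does not increase
(`⟨∇f(x),p⟩ + Ψ(x+p) - Ψ(x) + ½⟨Tp,p⟩ ≤ 0`) with `T` `μ`-coercive, then for
`α ∈ [0,1]`, `F(x+αp) ≤ F(x) + (‖p‖²/2)(α²L - αμ)`, and when additionally
`α ≤ μ/(L + 2γ‖p‖^δ)`, the sufficient decrease `F(x+αp) ≤ F(x) - γα²‖p‖^{2+δ}` holds. -/
theorem line_search_sufficient_decrease
    {H : Type*} [NormedAddCommGroup H] [InnerProductSpace ℝ H] [CompleteSpace H]
    (f : H → ℝ) (f' : H → H) (hf : ∀ x, HasGradientAt f (f' x) x)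
    (L : ℝ) (hL : 0 < L) (hLip : ∀ x y : H, ‖f' x - f' y‖ ≤ L * ‖x - y‖)
    (Ψ : H → ℝ) (hΨ_conv : ConvexOn ℝ Set.univ Ψ)
    (T : H →L[ℝ] H) (μ : ℝ) (hμ : 0 < μ) (hT : ∀ v : H, μ * ‖v‖ ^ 2 ≤ ⟪v, T v⟫)
    (γ δ : ℝ) (hγ : 0 < γ) (hδ : 0 ≤ δ)
    (x p : H)
    (hmodel : ⟪f' x, p⟫ + Ψ (x + p) - Ψ x + (1 / 2) * ⟪T p, p⟫ ≤ 0) :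
    (∀ α : ℝ, α ∈ Set.Icc (0 : ℝ) 1 →
      f (x + α • p) + Ψ (x + α • p) ≤
        f x + Ψ x + (‖p‖ ^ 2 / 2) * (α ^ 2 * L - α * μ)) ∧
    (∀ α : ℝ, α ∈ Set.Icc (0 : ℝ) 1 → α ≤ μ / (L + 2 * γ * ‖p‖ ^ δ) →
      f (x + α • p) + Ψ (x + α • p) ≤
        f x + Ψ x - γ * α ^ 2 * ‖p‖ ^ (2 + δ)) :=
  line_search_sufficient_decrease_general f f' hf L hL hLip Ψ hΨ_conv T μ hT γ δ hγ hδ x p hmodel
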